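/- Let G be a group acting freely on a ℤⁿ-tree with regular length function, and let A be an abelian subgroup all of whose elements are cyclically reduced. If s, t ∈ A satisfy l(s) = l(t), then s = t or s = t⁻¹. -/

import Mathlib

variable {Λ X G : Type*}

/-- `d` is a `Λ`-metric on `X` (`Λ` an ordered abelian group). -/
structure IsLambdaMetric [AddCommGroup Λ] [LinearOrder Λ] [IsOrderedAddMonoid Λ] (d : X → X → Λ) : Prop where
  nonneg : ∀ x y, 0 ≤ d x y
  eq_zero_iff : ∀ x y, d x y = 0 ↔ x = y
  symm : ∀ x y, d x y = d y x
  triangle : ∀ x y z, d x z ≤ d x y + d y z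

/-- `S` is a segment with endpoints `x`, `y` in the `Λ`-metric space `(X, d)`:
the image of an isometry `α` from a closed interval `[a,b] ⊆ Λ`. -/
def IsSegment [AddCommGroup Λ] [LinearOrder Λ] [IsOrderedAddMonoid Λ] (d : X → X → Λ) (S : Set X) (x y : X) : Prop :=
  ∃ (a b : Λ) (α : Λ → X), a ≤ b ∧ α a = x ∧ α b = y ∧
    (∀ s ∈ Set.Icc a b, ∀ t ∈ Set.Icc a b, d (α s) (α t) = |s - t|) ∧
    S = α '' Set.Icc a b

/-- `(X, d)` is a `Λ`-tree: a geodesic `Λ`-metric space in which (T2) the union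
of two segments meeting in a single common endpoint is a segment, and (T3) the
intersection of two segments with a common endpoint is a segment. -/
structure IsLambdaTree [AddCommGroup Λ] [LinearOrder Λ] [IsOrderedAddMonoid Λ] (d : X → X → Λ) : Prop where
  metric : IsLambdaMetric d
  geodesic : ∀ x y : X, ∃ S : Set X, IsSegment d S x y
  union_seg : ∀ (S₁ S₂ : Set X) (x y p : X), IsSegment d S₁ p x → IsSegment d S₂ p y →
      S₁ ∩ S₂ = {p} → IsSegment d (S₁ ∪ S₂) x y
  inter_seg : ∀ (S₁ S₂ : Set X) (x y z : X), IsSegment d S₁ x y → IsSegment d S₂ x z →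
      ∃ w : X, IsSegment d (S₁ ∩ S₂) x w


/-- `ℤⁿ` with the lexicographic order, as a linearly ordered abelian group. -/
noncomputable instance ZnLex.instLinearOrderedAddCommGroup (n : ℕ) :
    IsOrderedAddMonoid (Lex (Fin n → ℤ)) :=
  inferInstance

/-! Any three points of a `Λ`-tree span a tripod, whence the four point condition.
If `t` displaces `x` minimally and `t² x ≠ x`, the centre `w` of the tripod on `x, t x, t⁻¹ x`
is displaced by at most `|l(t) - 2 d(x, w)|`; as `l(t) ≤ d(w, t w)`, this forces `w = x` (or
`w = t x = t⁻¹ x`, excluded), that is `l(t²) = 2 l(t)`. The four point condition for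
`s x, x, t x, t⁻¹ x` then gives `l(s) + l(t) ≤ d(s x, tᵉ x)` for a sign `e`, and for
`tᵉ s x, x, s x, tᵉ x`, as `s` commutes with `t` and `l(s) = l(t)`, it gives `tᵉ s x = x`;
by freeness `s = t⁻ᵉ`. -/

lemma le_of_add_self_le_add_self {M : Type*} [AddCommMonoid M] [LinearOrder M]
    [IsOrderedCancelAddMonoid M] {a b : M} (h : a + a ≤ b + b) : a ≤ b :=
  le_of_nsmul_le_nsmul_right two_ne_zero (by rwa [two_nsmul, two_nsmul])

section LambdaTree

variable [AddCommGroup Λ] [LinearOrder Λ] [IsOrderedAddMonoid Λ] {d : X → X → Λ}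

namespace IsSegment

variable {S : Set X} {x y z : X}

lemma left_mem (h : IsSegment d S x y) : x ∈ S := by
  obtain ⟨a, b, α, hab, rfl, -, -, rfl⟩ := h
  exact ⟨a, ⟨le_rfl, hab⟩, rfl⟩

lemma right_mem (h : IsSegment d S x y) : y ∈ S := by
  obtain ⟨a, b, α, hab, -, rfl, -, rfl⟩ := h
  exact ⟨b, ⟨hab, le_rfl⟩, rfl⟩

lemma dist_eq_abs_sub (h : IsSegment d S x y) {z₁ z₂ : X} (h₁ : z₁ ∈ S) (h₂ : z₂ ∈ S) :
    d z₁ z₂ = |d x z₁ - d x z₂| := by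
  obtain ⟨a, b, α, hab, rfl, -, hα, rfl⟩ := h
  obtain ⟨c₁, hc₁, rfl⟩ := h₁
  obtain ⟨c₂, hc₂, rfl⟩ := h₂
  have ha : a ∈ Set.Icc a b := ⟨le_rfl, hab⟩
  rw [hα _ hc₁ _ hc₂, hα _ ha _ hc₁, hα _ ha _ hc₂, abs_sub_comm a,
    abs_of_nonneg (sub_nonneg.2 hc₁.1), abs_sub_comm a, abs_of_nonneg (sub_nonneg.2 hc₂.1),
    sub_sub_sub_cancel_right]

lemma dist_le (h : IsSegment d S x y) (hz : z ∈ S) : d x z ≤ d x y := by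
  obtain ⟨a, b, α, hab, rfl, rfl, hα, rfl⟩ := h
  obtain ⟨c, hc, rfl⟩ := hz
  have ha : a ∈ Set.Icc a b := ⟨le_rfl, hab⟩
  rw [hα _ ha _ hc, hα _ ha _ ⟨hab, le_rfl⟩, abs_sub_comm, abs_sub_comm a]
  exact abs_le_abs_of_nonneg (sub_nonneg.2 hc.1) (sub_le_sub_right hc.2 a)

lemma dist_add_dist (h : IsSegment d S x y) (hz : z ∈ S) : d x z + d z y = d x y := by
  rw [h.dist_eq_abs_sub hz h.right_mem, abs_sub_comm, abs_of_nonneg (sub_nonneg.2 (h.dist_le hz)),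
    add_sub_cancel]

lemma exists_tail (h : IsSegment d S x y) (hz : z ∈ S) :
    ∃ T ⊆ S, IsSegment d T z y ∧ ∀ w ∈ T, d x w = d x z + d z w := by
  obtain ⟨a, b, α, hab, rfl, rfl, hα, rfl⟩ := h
  obtain ⟨c, hc, rfl⟩ := hz
  have hsub : Set.Icc c b ⊆ Set.Icc a b := Set.Icc_subset_Icc_left hc.1
  refine ⟨α '' Set.Icc c b, Set.image_mono hsub,
    ⟨c, b, α, hc.2, rfl, rfl, fun u hu v hv => hα u (hsub hu) v (hsub hv), rfl⟩, ?_⟩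
  rintro _ ⟨e, he, rfl⟩
  have ha : a ∈ Set.Icc a b := ⟨le_rfl, hab⟩
  rw [hα _ ha _ (hsub he), hα _ ha _ hc, hα _ hc _ (hsub he), abs_sub_comm a,
    abs_of_nonneg (sub_nonneg.2 (hsub he).1), abs_sub_comm a, abs_of_nonneg (sub_nonneg.2 hc.1),
    abs_sub_comm c, abs_of_nonneg (sub_nonneg.2 he.1), sub_add_sub_cancel']

end IsSegment

namespace IsLambdaTree

lemma exists_tripod_center (h : IsLambdaTree d) {S : Set X} {p q : X} (hS : IsSegment d S p q) (r : X) :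
    ∃ w ∈ S, d p w + d w q = d p q ∧ d p w + d w r = d p r ∧ d q w + d w r = d q r := by
  obtain ⟨S', hS'⟩ := h.geodesic p r
  obtain ⟨w, hw⟩ := h.inter_seg S S' p q r hS hS'
  obtain ⟨hwS, hwS'⟩ : w ∈ S ∩ S' := hw.right_mem
  obtain ⟨T, hTS, hT, hTdist⟩ := hS.exists_tail hwS
  obtain ⟨T', hT'S', hT', -⟩ := hS'.exists_tail hwS'
  -- a point of `T ∩ T'` lies on `S ∩ S'`, i.e. between `p` and `w`, but also beyond `w`
  have hTT' : T ∩ T' = {w} := by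
    refine Set.eq_singleton_iff_unique_mem.2 ⟨⟨hT.left_mem, hT'.left_mem⟩, fun z hz => ?_⟩
    have hpz := hw.dist_add_dist ⟨hTS hz.1, hT'S' hz.2⟩
    rw [hTdist z hz.1, add_assoc, add_eq_left, h.metric.symm z w] at hpz
    have hwz := ((add_eq_zero_iff_of_nonneg (h.metric.nonneg w z) (h.metric.nonneg w z)).1 hpz).1
    exact ((h.metric.eq_zero_iff w z).1 hwz).symm
  have hqr := (h.union_seg T T' q r w hT hT' hTT').dist_add_dist (Set.mem_union_left _ hT.left_mem)
  exact ⟨w, hwS, hS.dist_add_dist hwS, hS'.dist_add_dist hwS', hqr⟩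

lemma four_point (h : IsLambdaTree d) (p q r s : X) :
    d p q + d r s ≤ max (d p r + d q s) (d p s + d q r) := by
  obtain ⟨S, hS⟩ := h.geodesic p q
  obtain ⟨w₁, hw₁, hpq₁, hpr₁, hqr₁⟩ := h.exists_tripod_center hS r
  obtain ⟨w₂, hw₂, hpq₂, hps₂, hqs₂⟩ := h.exists_tripod_center hS s
  -- `w₁`, `w₂` are the projections of `r`, `s` to `[p, q]`; bound `d r s` by going through them
  wlog hle : d p w₁ ≤ d p w₂ generalizing r s w₁ w₂
  · rw [max_comm, h.metric.symm r s]
    exact this s r w₂ hw₂ hpq₂ hps₂ hqs₂ w₁ hw₁ hpq₁ hpr₁ hqr₁ (le_of_not_ge hle)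
  have hm := h.metric
  have h₁₂ : d w₁ w₂ = d p w₂ - d p w₁ := by
    rw [hS.dist_eq_abs_sub hw₁ hw₂, abs_sub_comm, abs_of_nonneg (sub_nonneg.2 hle)]
  have hrw₁ : d r w₁ = d q r - d p q + d p w₁ := by
    rw [hm.symm r w₁, eq_sub_of_add_eq' hqr₁, hm.symm q w₁, eq_sub_of_add_eq' hpq₁]; abel
  refine le_max_of_le_right ?_
  calc d p q + d r s ≤ d p q + (d r w₁ + (d w₁ w₂ + d w₂ s)) := by
        gcongr
        exact (hm.triangle r w₁ s).trans (by gcongr; exact hm.triangle w₁ w₂ s)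
    _ = d p s + d q r := by rw [hrw₁, h₁₂, eq_sub_of_add_eq' hps₂]; abel

end IsLambdaTree

end LambdaTree

section Action

variable [Group G] [MulAction G X] {d : X → X → Λ}

lemma dist_smul_smul_eq (hiso : ∀ (g : G) (x y : X), d (g • x) (g • y) = d x y) (g f : G) (x : X) :
    d (g • x) (f • x) = d x ((g⁻¹ * f) • x) := by
  rw [← hiso g⁻¹, inv_smul_smul, mul_smul]

lemma dist_inv_smul_eq (hsymm : ∀ x y, d x y = d y x)
    (hiso : ∀ (g : G) (x y : X), d (g • x) (g • y) = d x y) (g : G) (x : X) :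
    d x (g⁻¹ • x) = d x (g • x) := by
  rw [← hiso g, smul_inv_smul, hsymm]

lemma dist_smul_inv_smul_eq (hsymm : ∀ x y, d x y = d y x)
    (hiso : ∀ (g : G) (x y : X), d (g • x) (g • y) = d x y) (g : G) (x : X) :
    d (g • x) (g⁻¹ • x) = d x ((g * g) • x) := by
  rw [dist_smul_smul_eq hiso, ← mul_inv_rev, dist_inv_smul_eq hsymm hiso]

variable [AddCommGroup Λ] [LinearOrder Λ] [IsOrderedAddMonoid Λ]

lemma dist_mul_self_smul_eq_add (htree : IsLambdaTree d)
    (hiso : ∀ (g : G) (x y : X), d (g • x) (g • y) = d x y) {g : G} {x : X}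
    (hmin : ∀ y, d x (g • x) ≤ d y (g • y)) (hg : (g * g) • x ≠ x) :
    d x ((g * g) • x) = d x (g • x) + d x (g • x) := by
  have hm := htree.metric
  obtain ⟨S, hS⟩ := htree.geodesic x (g • x)
  obtain ⟨w, -, hsplit, hw_inv, hgg⟩ := htree.exists_tripod_center hS (g⁻¹ • x)
  rw [dist_inv_smul_eq hm.symm hiso, ← hsplit, add_right_inj] at hw_inv
  rw [dist_smul_inv_smul_eq hm.symm hiso, hm.symm _ w, hw_inv] at hgg
  have hgw : d (g • w) x = d w (g • x) := by rw [← hiso g⁻¹, inv_smul_smul, hw_inv]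
  -- `d(w, g w) + l(g) ≤ 2 max (d(x, w), d(w, g x))`, while minimality gives `l(g) ≤ d(w, g w)`
  have key := htree.four_point w (g • w) x (g • x)
  rw [hiso, hm.symm w x, hgw] at key
  rcases le_max_iff.1 ((add_le_add (hmin w) le_rfl).trans key) with hle | hle
  · -- the centre `w` would be both `g x` and `g⁻¹ x`
    have hwg : d w (g • x) = 0 := le_antisymm
      ((add_le_iff_nonpos_right _).1 (hsplit.trans_le (le_of_add_self_le_add_self hle)))
      (hm.nonneg _ _)
    have hw₁ : w = g • x := (hm.eq_zero_iff _ _).1 hwg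
    have hw₂ : w = g⁻¹ • x := (hm.eq_zero_iff _ _).1 (hw_inv.trans hwg)
    exact absurd (by rw [mul_smul, ← hw₁, hw₂, smul_inv_smul]) hg
  · have hxw₀ : d x w = 0 := le_antisymm
      ((add_le_iff_nonpos_left).1 (hsplit.trans_le (le_of_add_self_le_add_self hle)))
      (hm.nonneg _ _)
    rw [hxw₀, zero_add] at hsplit
    rw [← hgg, hsplit]

lemma le_dist_smul_or_le_dist_inv_smul (htree : IsLambdaTree d)
    (hiso : ∀ (g : G) (x y : X), d (g • x) (g • y) = d x y) (s : G) {t : G} {x : X}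
    (ht : d x ((t * t) • x) = d x (t • x) + d x (t • x)) :
    d x (s • x) + d x (t • x) ≤ d (s • x) (t • x) ∨
      d x (s • x) + d x (t • x) ≤ d (s • x) (t⁻¹ • x) := by
  have hm := htree.metric
  have key := htree.four_point (s • x) x (t • x) (t⁻¹ • x)
  rw [hm.symm (s • x) x, dist_smul_inv_smul_eq hm.symm hiso, ht, dist_inv_smul_eq hm.symm hiso, ← add_assoc,
    max_add_add_right, add_le_add_iff_right] at key
  exact le_max_iff.1 key

lemma mul_smul_eq_self_of_commute (htree : IsLambdaTree d)
    (hiso : ∀ (g : G) (x y : X), d (g • x) (g • y) = d x y) {s t : G} {x : X} (hst : Commute s t)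
    (hlen : d x (s • x) = d x (t • x)) (h : d x (s • x) + d x (t • x) ≤ d (s • x) (t • x)) :
    (t * s) • x = x := by
  have hm := htree.metric
  have key := htree.four_point ((t * s) • x) x (s • x) (t • x)
  have hts : d ((t * s) • x) (s • x) = d x (t • x) := by rw [← hst.eq, mul_smul, hiso, hm.symm]
  have hss : d ((t * s) • x) (t • x) = d x (s • x) := by rw [mul_smul, hiso, hm.symm]
  rw [hts, hss, hlen, max_self] at key
  rw [hlen] at h
  have hx : d ((t * s) • x) x = 0 :=
    le_antisymm ((add_le_iff_nonpos_left).1 (key.trans h)) (hm.nonneg _ _)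
  exact (hm.eq_zero_iff _ _).1 hx

end Action

theorem eq_or_eq_inv_of_length_eq_general {n : ℕ} {G : Type*} [Group G] [MulAction G X]
    (d : X → X → Lex (Fin n → ℤ))
    (htree : IsLambdaTree d)
    (hiso : ∀ (g : G) (x y : X), d (g • x) (g • y) = d x y)
    (hfree : ∀ g : G, g ≠ 1 → (∀ t : X, g • t ≠ t) ∧ ∀ t : X, (g * g) • t ≠ t)
    (x : X)
    (lT : G → Lex (Fin n → ℤ))
    (hlT : ∀ g : G, (∃ t : X, d t (g • t) = lT g) ∧ ∀ t : X, lT g ≤ d t (g • t))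
    (A : Subgroup G) (hab : ∀ a ∈ A, ∀ b ∈ A, a * b = b * a)
    (hcyc : ∀ a ∈ A, a ≠ 1 → d x (a • x) = lT a)
    (s t : G) (hsA : s ∈ A) (htA : t ∈ A)
    (hlen : d x (s • x) = d x (t • x)) :
    s = t ∨ s = t⁻¹ := by
  have hm := htree.metric
  have eq_one_of_fixed : ∀ g : G, g • x = x → g = 1 := fun g hg =>
    by_contra fun hg₁ => (hfree g hg₁).1 x hg
  obtain rfl | ht := eq_or_ne t 1
  · refine .inl (eq_one_of_fixed s ((hm.eq_zero_iff _ _).1 ?_).symm)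
    rw [hlen, one_smul, (hm.eq_zero_iff x x).2 rfl]
  have htt := dist_mul_self_smul_eq_add htree hiso (fun y => hcyc t htA ht ▸ (hlT t).2 y)
    ((hfree t ht).2 x)
  have hst : Commute s t := hab s hsA t htA
  rcases le_dist_smul_or_le_dist_inv_smul htree hiso s htt with h | h
  · exact .inr (eq_inv_of_mul_eq_one_right
      (eq_one_of_fixed _ (mul_smul_eq_self_of_commute htree hiso hst hlen h)))
  · rw [← dist_inv_smul_eq hm.symm hiso t] at hlen h
    exact .inl (inv_mul_eq_one.1
      (eq_one_of_fixed _ (mul_smul_eq_self_of_commute htree hiso hst.inv_right hlen h))).symm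

/-- let `G` act freely by isometries on a `ℤⁿ`-tree with base
point `x` and regular based length function `l g = d x (g • x)`, and let `A` be
an abelian subgroup all of whose nontrivial elements are cyclically reduced
(`l a = lT a`).  If `s, t ∈ A` have equal lengths then `s = t` or `s = t⁻¹`. -/
theorem eq_or_eq_inv_of_length_eq {n : ℕ} {G : Type*} [Group G] [MulAction G X]
    (d : X → X → Lex (Fin n → ℤ))
    (htree : IsLambdaTree d)
    (hiso : ∀ (g : G) (x y : X), d (g • x) (g • y) = d x y)
    (hfree : ∀ g : G, g ≠ 1 → (∀ t : X, g • t ≠ t) ∧ ∀ t : X, (g * g) • t ≠ t)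
    (x : X)
    (lT : G → Lex (Fin n → ℤ))
    (hlT : ∀ g : G, (∃ t : X, d t (g • t) = lT g) ∧ ∀ t : X, lT g ≤ d t (g • t))
    (hreg : ∀ g f : G, ∃ u g₁ f₁ : G,
      g = u * g₁ ∧ d x (g • x) = d x (u • x) + d x (g₁ • x) ∧
      f = u * f₁ ∧ d x (f • x) = d x (u • x) + d x (f₁ • x) ∧
      2 • d x (u • x) = d x (g • x) + d x (f • x) - d x ((g⁻¹ * f) • x))
    (A : Subgroup G) (hab : ∀ a ∈ A, ∀ b ∈ A, a * b = b * a)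
    (hcyc : ∀ a ∈ A, a ≠ 1 → d x (a • x) = lT a)
    (s t : G) (hsA : s ∈ A) (htA : t ∈ A)
    (hlen : d x (s • x) = d x (t • x)) :
    s = t ∨ s = t⁻¹ :=
  eq_or_eq_inv_of_length_eq_general d htree hiso hfree x lT hlT A hab hcyc s t hsA htA hlen
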